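/- For n ≥ 2 and τ_n ∈ 𝕋, the para-orthogonal rational function Q_n(z, τ_n) = φ_n(z) + τ_n·φ_n^*(z) is orthogonal to the (n−1)-dimensional subspace L_{n−1}(γ_n) = {f ∈ L_{n−1} : f(γ_n) = 0} = {ϖ_n^*(z)·p(z)/π_{n−1}(z) : p a complex polynomial of degree ≤ n−2}, where ϖ_n^*(z) = z − γ_n if γ_n ≠ ∞ and ϖ_n^*(z) = −1 if γ_n = ∞; that is, ⟨Q_n(·, τ_n), f⟩ = 0 for every f ∈ L_{n−1}(γ_n). -/

import Mathlib

noncomputable section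
open MeasureTheory
open scoped Classical

namespace ORF

/-- complex conjugation -/
def conj' (z : ℂ) : ℂ := (starRingEnd ℂ) z

/-- membership in the unit circle 𝕋 -/
def onT (z : ℂ) : Prop := ‖z‖ = 1

/-- `z` is a (strictly) positive real number -/
def posR (z : ℂ) : Prop := 0 < z.re ∧ z.im = 0

/-- σ_j = conj(α_j)/|α_j| (σ_j = 1 if α_j = 0, i.e. if β_j = ∞) -/
def sig (α : ℕ → ℂ) (j : ℕ) : ℂ :=
  if α j = 0 then 1 else conj' (α j) / (‖α j‖ : ℂ)

/-- ς_n = ∏_{j=1}^n σ_j -/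
def sigProd (α : ℕ → ℂ) (n : ℕ) : ℂ := ∏ j ∈ Finset.Icc 1 n, sig α j

/-- ϖ_j^α(z) = 1 − conj(α_j)·z, as a polynomial in z -/
def wA (α : ℕ → ℂ) (j : ℕ) : Polynomial ℂ :=
  1 - Polynomial.C (conj' (α j)) * Polynomial.X

/-- ϖ_j^β(z) = 1 − conj(β_j)·z = 1 − z/α_j, and −z when β_j = ∞ (α_j = 0) -/
def wB (α : ℕ → ℂ) (j : ℕ) : Polynomial ℂ :=
  if α j = 0 then -Polynomial.X else 1 - Polynomial.C (α j)⁻¹ * Polynomial.X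

/-- ϖ_j = ϖ_j^γ (γ_j = α_j when `c j`, γ_j = β_j otherwise) -/
def wG (α : ℕ → ℂ) (c : ℕ → Bool) (j : ℕ) : Polynomial ℂ :=
  if c j then wA α j else wB α j

/-- π_n^α -/
def piA (α : ℕ → ℂ) (n : ℕ) : Polynomial ℂ := ∏ j ∈ Finset.Icc 1 n, wA α j
/-- π_n^β -/
def piB (α : ℕ → ℂ) (n : ℕ) : Polynomial ℂ := ∏ j ∈ Finset.Icc 1 n, wB α j
/-- π_n = π_n^γ -/
def piG (α : ℕ → ℂ) (c : ℕ → Bool) (n : ℕ) : Polynomial ℂ := ∏ j ∈ Finset.Icc 1 n, wG α c j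

/-- 𝕒_n = {1 ≤ j ≤ n : γ_j = α_j} -/
def aSet (c : ℕ → Bool) (n : ℕ) : Finset ℕ := (Finset.Icc 1 n).filter (fun j => c j = true)
/-- 𝕓_n = {1 ≤ j ≤ n : γ_j = β_j} -/
def bSet (c : ℕ → Bool) (n : ℕ) : Finset ℕ := (Finset.Icc 1 n).filter (fun j => c j = false)

/-- Blaschke factor ζ_j^α -/
def zetaA (α : ℕ → ℂ) (j : ℕ) (z : ℂ) : ℂ :=
  if α j = 0 then z else sig α j * (z - α j) / (1 - conj' (α j) * z)

/-- Blaschke factor ζ_j^β (β_j = 1/conj(α_j); ζ_j^β(z) = 1/z when β_j = ∞) -/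
def zetaB (α : ℕ → ℂ) (j : ℕ) (z : ℂ) : ℂ :=
  if α j = 0 then z⁻¹ else sig α j * (z - (conj' (α j))⁻¹) / (1 - z / α j)

/-- ζ_j = ζ_j^γ -/
def zetaG (α : ℕ → ℂ) (c : ℕ → Bool) (j : ℕ) (z : ℂ) : ℂ :=
  if c j then zetaA α j z else zetaB α j z

/-- B_n^α -/
def BA (α : ℕ → ℂ) (n : ℕ) (z : ℂ) : ℂ := ∏ j ∈ Finset.Icc 1 n, zetaA α j z
/-- B_n^β -/
def BB (α : ℕ → ℂ) (n : ℕ) (z : ℂ) : ℂ := ∏ j ∈ Finset.Icc 1 n, zetaB α j z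
/-- B̌_n^α = ∏_{j ∈ 𝕒_n} ζ_j -/
def BcA (α : ℕ → ℂ) (c : ℕ → Bool) (n : ℕ) (z : ℂ) : ℂ := ∏ j ∈ aSet c n, zetaG α c j z
/-- B̌_n^β = ∏_{j ∈ 𝕓_n} ζ_j -/
def BcB (α : ℕ → ℂ) (c : ℕ → Bool) (n : ℕ) (z : ℂ) : ℂ := ∏ j ∈ bSet c n, zetaG α c j z

/-- ζ̌_n^α (= ζ_n if γ_n = α_n, = 1 otherwise) -/
def zcA (α : ℕ → ℂ) (c : ℕ → Bool) (n : ℕ) (z : ℂ) : ℂ :=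
  if c n then zetaG α c n z else 1
/-- ζ̌_n^β (= ζ_n if γ_n = β_n, = 1 otherwise) -/
def zcB (α : ℕ → ℂ) (c : ℕ → Bool) (n : ℕ) (z : ℂ) : ℂ :=
  if c n then 1 else zetaG α c n z

/-- The space L_n^ν = {p/π_n^ν : deg p ≤ n}; a function `f` belongs to it if it agrees
with such a rational function on the unit circle (where all these objects live). -/
def Lsp (pip : ℕ → Polynomial ℂ) (n : ℕ) : Set (ℂ → ℂ) :=
  {f | ∃ p : Polynomial ℂ, p.natDegree ≤ n ∧ ∀ z, onT z → f z = p.eval z / (pip n).eval z}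

/-- L_{n*}^ν = {f_* : f ∈ L_n^ν} (again as functions on the unit circle, where
f_*(z) = conj(f(1/conj z)) = conj(f(z))) -/
def LstarSp (pip : ℕ → Polynomial ℂ) (n : ℕ) : Set (ℂ → ℂ) :=
  {f | ∃ p : Polynomial ℂ, p.natDegree ≤ n ∧ ∀ z, onT z → f z = conj' (p.eval z / (pip n).eval z)}

/-- R_n^ν = L_n^ν · L_{n*}^ν -/
def Rset (pip : ℕ → Polynomial ℂ) (n : ℕ) : Set (ℂ → ℂ) :=
  {h | ∃ g ∈ Lsp pip n, ∃ k ∈ LstarSp pip n, ∀ z, onT z → h z = g z * k z}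

/-- the substar conjugate f_*(z) = conj(f(1/conj z)) -/
def substar (f : ℂ → ℂ) : ℂ → ℂ := fun z => conj' (f ((conj' z)⁻¹))

/-- superstar conjugate q^*(z) = z^n conj(q(1/conj z)) of a polynomial of degree ≤ n -/
def pstar (n : ℕ) (q : Polynomial ℂ) : Polynomial ℂ :=
  ∑ k ∈ Finset.range (n + 1), Polynomial.C (conj' (q.coeff k)) * Polynomial.X ^ (n - k)

/-- the inner product ⟨f,g⟩ = ∫ conj(f) g dμ -/
def inn (μ : Measure ℂ) (f g : ℂ → ℂ) : ℂ := ∫ z, conj' (f z) * g z ∂μ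

/-- the reciprocal ORF φ_n^{ν*} = B_n^ν (φ_n^ν)_* (resp. φ_n^* = B̌_n^α B̌_n^β (φ_n)_*),
written out as the rational function ς_n p_n^{ν*}/π_n^ν -/
def starF (α : ℕ → ℂ) (pip : ℕ → Polynomial ℂ) (p : ℕ → Polynomial ℂ) (n : ℕ) (z : ℂ) : ℂ :=
  sigProd α n * (pstar n (p n)).eval z / (pip n).eval z

/-- `μ` is a probability measure on the unit circle 𝕋, positive a.e. on 𝕋 -/
structure CircleMeasure (μ : Measure ℂ) : Prop where
  prob : IsProbabilityMeasure μ
  circ : μ {z | ¬ onT z} = 0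
  pos : ∀ U : Set ℂ, IsOpen U → (U ∩ {z | onT z}).Nonempty → 0 < μ U

/-- `φ` (with numerators `p`) is the sequence of orthonormal rational functions for the
nested spaces `Lsp pip`: φ_0 = 1, φ_n = p_n/π_n ∈ L_n \ L_{n-1}, φ_n ⊥ L_{n-1}, ‖φ_n‖ = 1. -/
structure IsORF (μ : Measure ℂ) (pip : ℕ → Polynomial ℂ) (φ : ℕ → ℂ → ℂ)
    (p : ℕ → Polynomial ℂ) : Prop where
  rep : ∀ n z, φ n z = (p n).eval z / (pip n).eval z
  deg : ∀ n, (p n).natDegree ≤ n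
  p0 : p 0 = 1
  notmem : ∀ n, 1 ≤ n → φ n ∉ Lsp pip (n - 1)
  orth : ∀ n, 1 ≤ n → ∀ f ∈ Lsp pip (n - 1), inn μ (φ n) f = 0
  norm : ∀ n, inn μ (φ n) (φ n) = 1

/-- normalization φ_n^{α*}(α_n) > 0 -/
def normA (α : ℕ → ℂ) (p : ℕ → Polynomial ℂ) (n : ℕ) : Prop :=
  posR (sigProd α n * (pstar n (p n)).eval (α n) / (piA α n).eval (α n))

/-- normalization φ_n^{β*}(β_n) > 0 (when β_n = ∞ the value is the limit,
i.e. the ratio of the coefficients of z^n) -/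
def normB (α : ℕ → ℂ) (p : ℕ → Polynomial ℂ) (n : ℕ) : Prop :=
  if α n = 0 then posR (sigProd α n * (pstar n (p n)).coeff n / (piB α n).coeff n)
  else posR (sigProd α n * (pstar n (p n)).eval ((conj' (α n))⁻¹) /
    (piB α n).eval ((conj' (α n))⁻¹))

/-- π̌_n^α = ∏_{j∈𝕒_n} ϖ_j -/
def pidA (α : ℕ → ℂ) (c : ℕ → Bool) (n : ℕ) : Polynomial ℂ := ∏ j ∈ aSet c n, wA α j
/-- π̌_n^β = ∏_{j∈𝕓_n} ϖ_j -/
def pidB (α : ℕ → ℂ) (c : ℕ → Bool) (n : ℕ) : Polynomial ℂ := ∏ j ∈ bSet c n, wB α j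
/-- ∏_{j∈𝕓_n}(z − β_j), a factor being −1 when β_j = ∞ -/
def dB (α : ℕ → ℂ) (c : ℕ → Bool) (n : ℕ) : Polynomial ℂ :=
  ∏ j ∈ bSet c n,
    (if α j = 0 then (-1 : Polynomial ℂ) else Polynomial.X - Polynomial.C ((conj' (α j))⁻¹))
/-- ∏_{j∈𝕒_n}(z − α_j) -/
def dA (α : ℕ → ℂ) (c : ℕ → Bool) (n : ℕ) : Polynomial ℂ :=
  ∏ j ∈ aSet c n, (Polynomial.X - Polynomial.C (α j))

/-- ς̌_n^α = ∏_{j∈𝕒_n} σ_j -/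
def sigcA (α : ℕ → ℂ) (c : ℕ → Bool) (n : ℕ) : ℂ := ∏ j ∈ aSet c n, sig α j
/-- ς̌_n^β = ∏_{j∈𝕓_n} σ_j -/
def sigcB (α : ℕ → ℂ) (c : ℕ → Bool) (n : ℕ) : ℂ := ∏ j ∈ bSet c n, sig α j

/-- normalization for the γ-sequence: (φ_n^*/B̌_n^β)(α_n) > 0 when γ_n = α_n and
(φ_n^*/B̌_n^α)(β_n) > 0 when γ_n = β_n, written via the identities
φ_n^*/B̌_n^β = ς̌_n^α p_n^*/(π̌_n^α ∏_{j∈𝕓_n}(z−β_j)) and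
φ_n^*/B̌_n^α = ς̌_n^β p_n^*/(π̌_n^β ∏_{j∈𝕒_n}(z−α_j)) (the value at β_n = ∞ being the
limit, i.e. the ratio of the coefficients of z^n). -/
def normG (α : ℕ → ℂ) (c : ℕ → Bool) (p : ℕ → Polynomial ℂ) (n : ℕ) : Prop :=
  if c n then
    posR (sigcA α c n * (pstar n (p n)).eval (α n) /
      ((pidA α c n).eval (α n) * (dB α c n).eval (α n)))
  else if α n = 0 then
    posR (sigcB α c n * (pstar n (p n)).coeff n / ((pidB α c n) * dA α c n).coeff n)
  else
    posR (sigcB α c n * (pstar n (p n)).eval ((conj' (α n))⁻¹) /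
      ((pidB α c n) * dA α c n).eval ((conj' (α n))⁻¹))

/-- the reproducing kernel k_n(z,w) = Σ_{k=0}^n φ_k(z) conj(φ_k(w)) -/
def ker (φ : ℕ → ℂ → ℂ) (n : ℕ) (z w : ℂ) : ℂ :=
  ∑ k ∈ Finset.range (n + 1), φ k z * conj' (φ k w)

/-- evaluation of a polynomial of degree ≤ m at γ_j (its coefficient of z^m when γ_j = ∞) -/
def gEval (α : ℕ → ℂ) (c : ℕ → Bool) (m j : ℕ) (q : Polynomial ℂ) : ℂ :=
  if c j then q.eval (α j)
  else if α j = 0 then q.coeff m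
  else q.eval ((conj' (α j))⁻¹)

/-- evaluation of a polynomial of degree ≤ m at β_j (its coefficient of z^m when β_j = ∞) -/
def bEval (α : ℕ → ℂ) (m j : ℕ) (q : Polynomial ℂ) : ℂ :=
  if α j = 0 then q.coeff m else q.eval ((conj' (α j))⁻¹)

/-- η_n^α (the unimodular constant in the Szegő parameter λ_n^α) -/
def etaA (α : ℕ → ℂ) (p : ℕ → Polynomial ℂ) (n : ℕ) : ℂ :=
  conj' (sigProd α (n - 2)) * conj' ((pstar (n - 1) (p (n - 1))).eval (α (n - 1))) /
    ((pstar (n - 1) (p (n - 1))).eval (α (n - 1)))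

/-- the Szegő parameter λ_n^α -/
def lamA (α : ℕ → ℂ) (p : ℕ → Polynomial ℂ) (n : ℕ) : ℂ :=
  etaA α p n * (p n).eval (α (n - 1)) / conj' ((pstar n (p n)).eval (α (n - 1)))

/-- η_n^β -/
def etaB (α : ℕ → ℂ) (p : ℕ → Polynomial ℂ) (n : ℕ) : ℂ :=
  conj' (sigProd α (n - 2)) * conj' (bEval α (n - 1) (n - 1) (pstar (n - 1) (p (n - 1)))) /
    (bEval α (n - 1) (n - 1) (pstar (n - 1) (p (n - 1))))

/-- the Szegő parameter λ_n^β -/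
def lamB (α : ℕ → ℂ) (p : ℕ → Polynomial ℂ) (n : ℕ) : ℂ :=
  etaB α p n * bEval α n (n - 1) (p n) / conj' (bEval α n (n - 1) (pstar n (p n)))

/-- η_n = η_n^γ -/
def etaG (α : ℕ → ℂ) (c : ℕ → Bool) (p : ℕ → Polynomial ℂ) (n : ℕ) : ℂ :=
  conj' (sigProd α (n - 2)) * conj' (gEval α c (n - 1) (n - 1) (pstar (n - 1) (p (n - 1)))) /
    (gEval α c (n - 1) (n - 1) (pstar (n - 1) (p (n - 1))))

/-- the Szegő parameter λ_n = λ_n^γ -/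
def lamG (α : ℕ → ℂ) (c : ℕ → Bool) (p : ℕ → Polynomial ℂ) (n : ℕ) : ℂ :=
  etaG α c p n * gEval α c n (n - 1) (p n) / conj' (gEval α c n (n - 1) (pstar n (p n)))

/-- functions of the second kind: ψ(z) = ∫ E(t,z) φ(t) − D(t,z) φ(z) dμ(t) -/
def psi (μ : Measure ℂ) (φ : ℂ → ℂ) (z : ℂ) : ℂ :=
  ∫ t, (2 * t / (t - z)) * φ t - ((t + z) / (t - z)) * φ z ∂μ

/-- ∏_{j=k+1}^n ϖ_j -/
def tailProd (α : ℕ → ℂ) (c : ℕ → Bool) (n k : ℕ) : Polynomial ℂ :=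
  ∏ j ∈ Finset.Icc (k + 1) n, wG α c j

/-- the numerator C_n(z,w) of the kernel k_n = C_n/(π_n(z) conj(π_n(w))), as a polynomial
in w after conjugation: C_n(z,w) = conj((CnPoly n z).eval w) -/
def CnPoly (α : ℕ → ℂ) (c : ℕ → Bool) (p : ℕ → Polynomial ℂ) (n : ℕ) (z : ℂ) : Polynomial ℂ :=
  ∑ k ∈ Finset.range (n + 1),
    Polynomial.C (conj' ((p k).eval z * (tailProd α c n k).eval z)) * ((p k) * tailProd α c n k)

/-- z ↦ C_n(z,∞) (the coefficient of w^n of w ↦ C_n(z,w)), as a polynomial in z -/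
def CnInf (α : ℕ → ℂ) (c : ℕ → Bool) (p : ℕ → Polynomial ℂ) (n : ℕ) : Polynomial ℂ :=
  ∑ k ∈ Finset.range (n + 1),
    ((p k) * tailProd α c n k) * Polynomial.C (conj' (((p k) * tailProd α c n k).coeff n))

/-- ϖ_n^*(z) = z − γ_n (= −1 when γ_n = ∞) -/
def wstarG (α : ℕ → ℂ) (c : ℕ → Bool) (n : ℕ) : Polynomial ℂ :=
  if c n then Polynomial.X - Polynomial.C (α n)
  else if α n = 0 then -1
  else Polynomial.X - Polynomial.C ((conj' (α n))⁻¹)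

end ORF

open ORF MeasureTheory

/-! On 𝕋 the numerator of φ_n^* is p_n^*(z) = zⁿ·conj(p_n(z)), and conj(ϖ_n(z)) = z⁻¹·ϖ_n^*(z).
Hence for f = ϖ_n^* q/π_{n−1} one gets conj(φ_n^*)·f = conj(ς_n)·conj(conj(φ_n)·g) on 𝕋, where
g = ϖ_n^* q^*/π_{n−1} is again in L_{n−1}(γ_n) ⊆ L_{n−1}. So ⟨φ_n^*, f⟩ = conj(ς_n)·conj⟨φ_n, g⟩,
and both ⟨φ_n, f⟩ and ⟨φ_n, g⟩ vanish because φ_n ⊥ L_{n−1}. -/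

namespace ORF

open Polynomial

lemma onT.ne_zero {z : ℂ} (hz : onT z) : z ≠ 0 := by
  rintro rfl
  simp [onT] at hz

lemma onT.conj_eq_inv {z : ℂ} (hz : onT z) : conj' z = z⁻¹ := by
  rw [conj', Complex.inv_def, Complex.normSq_eq_norm_sq, hz]
  simp

lemma onT_iff_mem_sphere {z : ℂ} : onT z ↔ z ∈ Metric.sphere (0 : ℂ) 1 :=
  mem_sphere_zero_iff_norm.symm

lemma natDegree_pstar_le (m : ℕ) (q : ℂ[X]) : (pstar m q).natDegree ≤ m := by
  refine natDegree_sum_le_of_forall_le _ _ fun k _ => (natDegree_C_mul_le _ _).trans ?_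
  rw [natDegree_X_pow]
  omega

lemma pstar_eval_of_onT {m : ℕ} {q : ℂ[X]} (hq : q.natDegree ≤ m) {z : ℂ} (hz : onT z) :
    (pstar m q).eval z = z ^ m * conj' (q.eval z) := by
  have hcz : (starRingEnd ℂ) z = z⁻¹ := hz.conj_eq_inv
  rw [pstar, eval_finsetSum, eval_eq_sum_range' (n := m + 1) (by omega), conj', map_sum,
    Finset.mul_sum]
  refine Finset.sum_congr rfl fun k hk => ?_
  simp only [conj', eval_mul, eval_C, eval_pow, eval_X, map_mul, map_pow, hcz,
    pow_sub₀ _ hz.ne_zero (Finset.mem_range_succ_iff.mp hk), inv_pow]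
  ring

lemma natDegree_wstarG_le (α : ℕ → ℂ) (c : ℕ → Bool) (j : ℕ) :
    (wstarG α c j).natDegree ≤ 1 := by
  unfold wstarG
  split_ifs <;> simp

lemma piG_succ (α : ℕ → ℂ) (c : ℕ → Bool) (m : ℕ) :
    piG α c (m + 1) = piG α c m * wG α c (m + 1) :=
  Finset.prod_Icc_succ_top (by omega) _

lemma conj_wG_eval (α : ℕ → ℂ) (c : ℕ → Bool) (j : ℕ) {z : ℂ} (hz : onT z) :
    conj' ((wG α c j).eval z) = z⁻¹ * (wstarG α c j).eval z := by
  have hz0 := hz.ne_zero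
  have hcz : (starRingEnd ℂ) z = z⁻¹ := hz.conj_eq_inv
  unfold wG wA wB wstarG
  split_ifs with hc h0
  · simp only [conj', eval_sub, eval_one, eval_mul, eval_C, eval_X, map_sub, map_mul, map_one,
      Complex.conj_conj, hcz]
    field_simp
  · simp [conj', hcz]
  · simp only [conj', eval_sub, eval_one, eval_mul, eval_C, eval_X, map_sub, map_mul, map_one,
      map_inv₀, hcz]
    have : (starRingEnd ℂ) (α j) ≠ 0 := by simpa using h0
    field_simp

section UnitCircle

variable {α : ℕ → ℂ} (hα : ∀ j, ‖α j‖ < 1) (c : ℕ → Bool)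
include hα

lemma wG_eval_ne_zero (j : ℕ) {z : ℂ} (hz : onT z) : (wG α c j).eval z ≠ 0 := by
  have hαj := hα j
  unfold wG wA wB
  split_ifs with hc h0
  · simp only [eval_sub, eval_one, eval_mul, eval_C, eval_X, sub_ne_zero]
    intro h
    have := congrArg norm h
    simp [conj', show ‖z‖ = 1 from hz] at this
    linarith
  · simpa using hz.ne_zero
  · simp only [eval_sub, eval_one, eval_mul, eval_C, eval_X, sub_ne_zero]
    intro h
    have := congrArg norm h
    simp [show ‖z‖ = 1 from hz] at this
    linarith

lemma piG_eval_ne_zero (m : ℕ) {z : ℂ} (hz : onT z) : (piG α c m).eval z ≠ 0 := by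
  rw [piG, eval_prod]
  exact Finset.prod_ne_zero_iff.mpr fun j _ => wG_eval_ne_zero hα c j hz

lemma conj_starF_mul_eq {p : ℕ → ℂ[X]} {q : ℂ[X]} {m : ℕ}
    (hp : (p (m + 2)).natDegree ≤ m + 2) (hq : q.natDegree ≤ m) {z : ℂ} (hz : onT z) :
    conj' (starF α (piG α c) p (m + 2) z) *
        ((wstarG α c (m + 2)).eval z * q.eval z / (piG α c (m + 1)).eval z) =
      conj' (sigProd α (m + 2)) *
        conj' (conj' ((p (m + 2)).eval z / (piG α c (m + 2)).eval z) *
          ((wstarG α c (m + 2)).eval z * (pstar m q).eval z / (piG α c (m + 1)).eval z)) := by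
  have hz0 := hz.ne_zero
  have hcz : (starRingEnd ℂ) z = z⁻¹ := hz.conj_eq_inv
  have hπ_ne := piG_eval_ne_zero hα c (m + 1) hz
  have hπ_conj_ne : (starRingEnd ℂ) ((piG α c (m + 1)).eval z) ≠ 0 :=
    (_root_.map_ne_zero _).mpr hπ_ne
  have hϖ_ne := wG_eval_ne_zero hα c (m + 2) hz
  have hϖ_conj :
      (starRingEnd ℂ) ((wG α c (m + 2)).eval z) = z⁻¹ * (wstarG α c (m + 2)).eval z :=
    conj_wG_eval α c (m + 2) hz
  have hϖstar_conj :
      (starRingEnd ℂ) ((wstarG α c (m + 2)).eval z) = z⁻¹ * (wG α c (m + 2)).eval z := by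
    have h := congrArg (starRingEnd ℂ) hϖ_conj
    rw [Complex.conj_conj, map_mul, map_inv₀, hcz, inv_inv] at h
    rw [h]
    field_simp
  have hϖstar_ne : (wstarG α c (m + 2)).eval z ≠ 0 := by
    intro h
    rw [h, mul_zero, map_eq_zero] at hϖ_conj
    exact hϖ_ne hϖ_conj
  rw [starF, piG_succ α c (m + 1), eval_mul, pstar_eval_of_onT hp hz, pstar_eval_of_onT hq hz]
  simp only [conj', map_mul, map_div₀, map_pow, map_inv₀, Complex.conj_conj, hcz, inv_inv,
    hϖ_conj, hϖstar_conj]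
  field_simp
  rw [pow_add]
  field_simp

end UnitCircle

lemma IsORF.mem_Lsp {μ : Measure ℂ} {pip : ℕ → ℂ[X]} {φ : ℕ → ℂ → ℂ} {p : ℕ → ℂ[X]}
    (hφ : IsORF μ pip φ p) (n : ℕ) : φ n ∈ Lsp pip n :=
  ⟨p n, hφ.deg n, fun z _ => hφ.rep n z⟩

lemma starF_mem_Lsp (α : ℕ → ℂ) (pip p : ℕ → ℂ[X]) (n : ℕ) : starF α pip p n ∈ Lsp pip n :=
  ⟨C (sigProd α n) * pstar n (p n), (natDegree_C_mul_le _ _).trans (natDegree_pstar_le n _),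
    fun z _ => by rw [starF, eval_mul, eval_C]⟩

lemma mem_Lsp_of_eq_wstarG_mul (α : ℕ → ℂ) (c : ℕ → Bool) {m : ℕ} {q : ℂ[X]}
    (hq : q.natDegree ≤ m) {f : ℂ → ℂ}
    (hf : ∀ z, onT z → f z = (wstarG α c (m + 2)).eval z * q.eval z / (piG α c (m + 1)).eval z) :
    f ∈ Lsp (piG α c) (m + 1) := by
  refine ⟨wstarG α c (m + 2) * q, natDegree_mul_le.trans ?_, fun z hz => ?_⟩
  · have := natDegree_wstarG_le α c (m + 2)
    omega
  · rw [hf z hz, eval_mul]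

lemma CircleMeasure.ae_onT {μ : Measure ℂ} (hμ : CircleMeasure μ) : ∀ᵐ z ∂μ, onT z :=
  ae_iff.mpr hμ.circ

lemma CircleMeasure.integrable_conj_mul {μ : Measure ℂ} (hμ : CircleMeasure μ)
    {pip : ℕ → ℂ[X]} (hpip : ∀ k z, onT z → (pip k).eval z ≠ 0) {f g : ℂ → ℂ} {k l : ℕ}
    (hf : f ∈ Lsp pip k) (hg : g ∈ Lsp pip l) :
    Integrable (fun z => conj' (f z) * g z) μ := by
  have := hμ.prob
  obtain ⟨P, -, hP⟩ := hf
  obtain ⟨Q, -, hQ⟩ := hg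
  have hcont : ContinuousOn (fun z => conj' (f z) * g z) (Metric.sphere 0 1) := by
    refine ContinuousOn.congr (f := fun z => conj' (P.eval z / (pip k).eval z) *
      (Q.eval z / (pip l).eval z)) ?_ fun z hz => ?_
    · have hne : ∀ k, ∀ z ∈ Metric.sphere (0 : ℂ) 1, (pip k).eval z ≠ 0 :=
        fun k z hz => hpip k z (onT_iff_mem_sphere.mpr hz)
      exact (Complex.continuous_conj.comp_continuousOn
        (P.continuousOn.div (pip k).continuousOn (hne k))).mul
        (Q.continuousOn.div (pip l).continuousOn (hne l))
    · rw [hP z (onT_iff_mem_sphere.mpr hz), hQ z (onT_iff_mem_sphere.mpr hz)]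
  have hsphere : ∀ᵐ z ∂μ, z ∈ Metric.sphere (0 : ℂ) 1 := by
    filter_upwards [hμ.ae_onT] with z hz using onT_iff_mem_sphere.mp hz
  simpa [IntegrableOn, Measure.restrict_eq_self_of_ae_mem hsphere] using
    hcont.integrableOn_compact (μ := μ) (isCompact_sphere 0 1)

lemma inn_add_mul_left {μ : Measure ℂ} {φ ψ f : ℂ → ℂ} (τ : ℂ)
    (hφ : Integrable (fun z => conj' (φ z) * f z) μ)
    (hψ : Integrable (fun z => conj' (ψ z) * f z) μ) :
    inn μ (fun z => φ z + τ * ψ z) f = inn μ φ f + conj' τ * inn μ ψ f := by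
  have h := integral_add hφ (hψ.const_mul (conj' τ))
  rw [integral_const_mul] at h
  rw [inn, inn, inn, ← h]
  congr 1 with z
  simp only [conj', map_add, map_mul]
  ring

lemma inn_eq_mul_conj_inn {μ : Measure ℂ} {ψ f φ g : ℂ → ℂ} (s : ℂ)
    (h : ∀ᵐ z ∂μ, conj' (ψ z) * f z = s * conj' (conj' (φ z) * g z)) :
    inn μ ψ f = s * conj' (inn μ φ g) := by
  rw [inn, integral_congr_ae h, integral_const_mul, inn, conj', ← integral_conj]
  rfl

end ORF

theorem stmt13_general (α : ℕ → ℂ) (hα : ∀ j, ‖α j‖ < 1)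
    (c : ℕ → Bool) (μ : Measure ℂ) (hμ : CircleMeasure μ)
    (φ : ℕ → ℂ → ℂ) (p : ℕ → Polynomial ℂ)
    (hφ : IsORF μ (piG α c) φ p)
    (n : ℕ) (hn : 2 ≤ n) (τ : ℂ)
    (f : ℂ → ℂ)
    (hf : ∃ q : Polynomial ℂ, q.natDegree ≤ n - 2 ∧
      ∀ z, onT z → f z = (wstarG α c n).eval z * q.eval z / (piG α c (n - 1)).eval z) :
    inn μ (fun z => φ n z + τ * starF α (piG α c) p n z) f = 0 := by
  obtain ⟨m, rfl⟩ : ∃ m, n = m + 2 := ⟨n - 2, by omega⟩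
  obtain ⟨q, hq, hfq⟩ := hf
  have hq : q.natDegree ≤ m := hq
  have hfL : f ∈ Lsp (piG α c) (m + 1) := mem_Lsp_of_eq_wstarG_mul α c hq hfq
  set g : ℂ → ℂ := fun z =>
    (wstarG α c (m + 2)).eval z * (pstar m q).eval z / (piG α c (m + 1)).eval z
  have hgL : g ∈ Lsp (piG α c) (m + 1) :=
    mem_Lsp_of_eq_wstarG_mul α c (natDegree_pstar_le m q) fun _ _ => rfl
  have hstar : inn μ (starF α (piG α c) p (m + 2)) f =
      conj' (sigProd α (m + 2)) * conj' (inn μ (φ (m + 2)) g) := by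
    refine inn_eq_mul_conj_inn _ ?_
    filter_upwards [hμ.ae_onT] with z hz
    rw [hfq z hz, hφ.rep]
    exact conj_starF_mul_eq hα c (hφ.deg _) hq hz
  have hπ : ∀ k z, onT z → (piG α c k).eval z ≠ 0 := fun k _ hz => piG_eval_ne_zero hα c k hz
  rw [inn_add_mul_left τ (hμ.integrable_conj_mul hπ (hφ.mem_Lsp _) hfL)
      (hμ.integrable_conj_mul hπ (starF_mem_Lsp α _ p _) hfL), hstar,
    hφ.orth _ (by omega) f hfL, hφ.orth _ (by omega) g hgL]
  simp [conj']

/-- Theorem `thm2`: for n ≥ 2 and τ_n ∈ 𝕋, the para-orthogonal rational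
function Q_n(z,τ_n) = φ_n(z) + τ_n φ_n^*(z) is orthogonal to
L_{n−1}(γ_n) = {ϖ_n^*(z) p(z)/π_{n−1}(z) : deg p ≤ n−2}, where ϖ_n^*(z) = z − γ_n
(= −1 when γ_n = ∞). -/
theorem stmt13 (α : ℕ → ℂ) (hα0 : α 0 = 0) (hα : ∀ j, ‖α j‖ < 1)
    (c : ℕ → Bool) (μ : Measure ℂ) (hμ : CircleMeasure μ)
    (φ : ℕ → ℂ → ℂ) (p : ℕ → Polynomial ℂ)
    (hφ : IsORF μ (piG α c) φ p) (hnφ : ∀ n, normG α c p n)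
    (n : ℕ) (hn : 2 ≤ n) (τ : ℂ) (hτ : ‖τ‖ = 1)
    (f : ℂ → ℂ)
    (hf : ∃ q : Polynomial ℂ, q.natDegree ≤ n - 2 ∧
      ∀ z, onT z → f z = (wstarG α c n).eval z * q.eval z / (piG α c (n - 1)).eval z) :
    inn μ (fun z => φ n z + τ * starF α (piG α c) p n z) f = 0 :=
  stmt13_general α hα c μ hμ φ p hφ n hn τ f hf
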